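/- arXiv:2111.11772 — 4 statements merged into one kernel-verified Lean document; each statement's English description precedes it below -/
import Mathlib

section
/- Let k ≥ 0 be an integer, let c⁺, c⁻ ∈ ℂ, and let p : [0,π] → ℂ be continuous. Then there exist a constant c ∈ ℂ and twice continuously differentiable functions f⁻ : [0,π/2] → ℂ and f⁺ : [π/2,π] → ℂ such that: (f⁻)''(θ) + (k+2)² f⁻(θ) = c⁻ p(θ) for all θ ∈ [0,π/2]; (f⁺)''(θ) + (k+2)² f⁺(θ) = c⁺ p(θ) for all θ ∈ [π/2,π]; f⁺(π/2) = f⁻(π/2) and (f⁺)'(π/2) = (f⁻)'(π/2); f⁻(0) = 0; and f⁺(π) = (−1)^{k+1} c π. -/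
/-!
Extend `p` continuously from `[0, π]` to `ℝ`; both angular equations then become forced
oscillator equations `y'' + ω² y = g` on the whole line, with `ω = k + 2`. These can be solved
with arbitrary Cauchy data at any point, by factoring `D² + ω² = (D - iω)(D + iω)` into two first
order linear equations, each solved by an integrating factor. Take `f⁻` with `f⁻(0) = 0`, then
`f⁺` with the Cauchy data of `f⁻` at `π/2`; the constant `c` is read off from `f⁺(π)`.
-/

open Set Real intervalIntegral

theorem hasDerivAt_cexp_mul_sub (μ : ℂ) (a θ : ℝ) :
    HasDerivAt (fun x : ℝ => Complex.exp (μ * (x - a)))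
      (μ * Complex.exp (μ * (θ - a))) θ := by
  have h : HasDerivAt (fun x : ℝ => μ * (x - a)) μ θ := by
    simpa using ((hasDerivAt_id θ).ofReal_comp.sub_const (a : ℂ)).const_mul μ
  simpa only [mul_comm μ] using h.cexp

theorem exists_hasDerivAt_eq_mul_add (μ : ℂ) {g : ℝ → ℂ} (hg : Continuous g) (a : ℝ) (z₀ : ℂ) :
    ∃ z : ℝ → ℂ, z a = z₀ ∧ ∀ θ, HasDerivAt z (μ * z θ + g θ) θ := by
  set F : ℝ → ℂ := fun s => Complex.exp (-μ * (s - a)) * g s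
  have hF : Continuous F := by fun_prop
  refine ⟨fun θ => Complex.exp (μ * (θ - a)) * (z₀ + ∫ s in a..θ, F s), by simp, fun θ => ?_⟩
  have hI := integral_hasDerivAt_right (hF.intervalIntegrable a θ)
    (hF.stronglyMeasurableAtFilter _ _) hF.continuousAt
  refine ((hasDerivAt_cexp_mul_sub μ a θ).mul (hI.const_add z₀)).congr_deriv ?_
  have hEF : Complex.exp (μ * (θ - a)) * Complex.exp (-μ * (θ - a)) = 1 := by
    rw [← Complex.exp_add]; simp
  linear_combination g θ * hEF

theorem ContDiff.of_hasDerivAt_eq_mul_add {μ : ℂ} {g z : ℝ → ℂ} {n : ℕ} (hg : ContDiff ℝ n g)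
    (hz : ∀ θ, HasDerivAt z (μ * z θ + g θ) θ) : ContDiff ℝ (n + 1) z := by
  have hderiv : deriv z = fun θ => μ * z θ + g θ := funext fun θ => (hz θ).deriv
  have hdiff : Differentiable ℝ z := fun θ => (hz θ).differentiableAt
  induction n with
  | zero =>
    refine contDiff_one_iff_deriv.2 ⟨hdiff, ?_⟩
    rw [hderiv]
    exact (continuous_const.mul hdiff.continuous).add (contDiff_zero.1 hg)
  | succ n ih =>
    have hz' : ContDiff ℝ (n + 1) z := ih (hg.of_le (by norm_cast; omega))
    refine contDiff_succ_iff_deriv.2 ⟨hdiff, by simp, ?_⟩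
    rw [hderiv]
    exact (contDiff_const.mul hz').add hg

theorem exists_contDiff_two_deriv_deriv_add_sq_mul (ω : ℂ) {g : ℝ → ℂ} (hg : Continuous g)
    (a : ℝ) (u₀ u₁ : ℂ) :
    ∃ y : ℝ → ℂ, ContDiff ℝ 2 y ∧ y a = u₀ ∧ deriv y a = u₁ ∧
      ∀ θ, deriv (deriv y) θ + ω ^ 2 * y θ = g θ := by
  set ν := Complex.I * ω
  obtain ⟨z, hza, hz⟩ := exists_hasDerivAt_eq_mul_add (-ν) hg a (u₁ - ν * u₀)
  have hz₁ : ContDiff ℝ 1 z := by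
    simpa using ContDiff.of_hasDerivAt_eq_mul_add (n := 0) (contDiff_zero.2 hg) hz
  obtain ⟨y, hya, hy⟩ := exists_hasDerivAt_eq_mul_add ν hz₁.continuous a u₀
  have hy' : deriv y = fun θ => ν * y θ + z θ := funext fun θ => (hy θ).deriv
  refine ⟨y, ContDiff.of_hasDerivAt_eq_mul_add (n := 1) hz₁ hy, hya,
    by rw [(hy a).deriv, hya, hza]; ring, fun θ => ?_⟩
  have hy'' : deriv (deriv y) θ = ν * (ν * y θ + z θ) + (-ν * z θ + g θ) := by
    rw [hy']
    exact (((hy θ).const_mul ν).add (hz θ)).deriv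
  rw [hy'']
  linear_combination ω ^ 2 * y θ * Complex.I_sq

theorem stmt_2 (k : ℕ) (cp cm : ℂ) (p : ℝ → ℂ)
    (hp : ContinuousOn p (Set.Icc 0 π)) :
    ∃ (c : ℂ) (fm fp : ℝ → ℂ),
      ContDiff ℝ 2 fm ∧ ContDiff ℝ 2 fp ∧
      (∀ θ ∈ Set.Icc (0 : ℝ) (π / 2),
        deriv (deriv fm) θ + ((k : ℂ) + 2) ^ 2 * fm θ = cm * p θ) ∧
      (∀ θ ∈ Set.Icc (π / 2) π,
        deriv (deriv fp) θ + ((k : ℂ) + 2) ^ 2 * fp θ = cp * p θ) ∧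
      fp (π / 2) = fm (π / 2) ∧
      deriv fp (π / 2) = deriv fm (π / 2) ∧
      fm 0 = 0 ∧
      fp π = (-1 : ℂ) ^ (k + 1) * c * (π : ℂ) := by
  set q := IccExtend pi_pos.le ((Icc 0 π).domRestrict p)
  have hq : Continuous q := continuous_IccExtend_iff.2 hp.domRestrict
  have hqp : ∀ θ ∈ Icc 0 π, q θ = p θ := fun θ hθ => IccExtend_of_mem _ _ hθ
  obtain ⟨fm, hfm, hfm_zero, -, hfm_eq⟩ :=
    exists_contDiff_two_deriv_deriv_add_sq_mul ((k : ℂ) + 2) (hq.const_smul cm) 0 0 0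
  obtain ⟨fp, hfp, hfp_val, hfp_deriv, hfp_eq⟩ :=
    exists_contDiff_two_deriv_deriv_add_sq_mul ((k : ℂ) + 2) (hq.const_smul cp) (π / 2)
      (fm (π / 2)) (deriv fm (π / 2))
  refine ⟨(-1) ^ (k + 1) * fp π / π, fm, fp, hfm, hfp, fun θ hθ => ?_, fun θ hθ => ?_,
    hfp_val, hfp_deriv, hfm_zero, ?_⟩
  · rw [hfm_eq, Pi.smul_apply, smul_eq_mul, hqp θ ⟨hθ.1, hθ.2.trans (half_le_self pi_pos.le)⟩]
  · rw [hfp_eq, Pi.smul_apply, smul_eq_mul, hqp θ ⟨pi_div_two_pos.le.trans hθ.1, hθ.2⟩]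
  · have hsq : ((-1 : ℂ) ^ (k + 1)) ^ 2 = 1 := by rw [← pow_mul, mul_comm, pow_mul, neg_one_sq, one_pow]
    have hπ : (π : ℂ) ≠ 0 := Complex.ofReal_ne_zero.2 pi_ne_zero
    field_simp
    linear_combination -fp π * hsq
end

section
/- Let n ≥ 0 be an integer and let H be a homogeneous polynomial of degree n in two real variables with complex coefficients that is harmonic (ΔH = 0). Let q⁺ and q⁻ be homogeneous polynomials of degree n+2 in two real variables with complex coefficients such that: Δq⁺ = H at every point of the open sector Σ_R^+ and Δq⁻ = H at every point of the open sector Σ_R^−; q⁺(0,t) = q⁻(0,t) and ∂q⁺/∂x₁(0,t) = ∂q⁻/∂x₁(0,t) for all t ∈ [0,R]; q⁺(s,0) = 0 and ∂q⁺/∂x₂(s,0) = 0 for all s ∈ [−R,0]; q⁻(s,0) = 0 and ∂q⁻/∂x₂(s,0) = 0 for all s ∈ [0,R]. Then q⁺ = q⁻ as polynomials. -/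
open MvPolynomial Set

/-- The Laplacian ∂²/∂x₁² + ∂²/∂x₂² on polynomials in two variables. -/
noncomputable def lapP (q : MvPolynomial (Fin 2) ℂ) : MvPolynomial (Fin 2) ℂ :=
  pderiv 0 (pderiv 0 q) + pderiv 1 (pderiv 1 q)

/-- Evaluation of a two-variable complex polynomial at a real point. -/
noncomputable def evalAt (q : MvPolynomial (Fin 2) ℂ) (x y : ℝ) : ℂ :=
  eval ![(x : ℂ), (y : ℂ)] q

/-- The open quarter sector `Σ_R^+` (second quadrant part of the upper half disk). -/
def sectorPlus (R : ℝ) : Set (ℝ × ℝ) :=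
  {p | p.1 < 0 ∧ 0 < p.2 ∧ p.1 ^ 2 + p.2 ^ 2 < R ^ 2}

/-- The open quarter sector `Σ_R^−` (first quadrant part of the upper half disk). -/
def sectorMinus (R : ℝ) : Set (ℝ × ℝ) :=
  {p | 0 < p.1 ∧ 0 < p.2 ∧ p.1 ^ 2 + p.2 ^ 2 < R ^ 2}

/-!
As `Δq⁺ = H` on the open set `Σ_R^+` and `Δq⁻ = H` on the open set `Σ_R^−`, both are
identities of polynomials, so `d = q⁺ - q⁻` is harmonic. The transmission conditions make
`d` and `∂d/∂x₁` vanish on a segment of the `x₂`-axis, i.e. the coefficients `c i j` of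
`x₁^i x₂^j` in `d` vanish for `i = 0, 1`. Harmonicity is the recurrence
`(i + 1)(i + 2) c (i + 2) j + (j + 1)(j + 2) c i (j + 2) = 0`, which propagates this to all
`i`: the Cauchy problem for the Laplacian with data on a line has at most one polynomial
solution.
-/

namespace MvPolynomial

theorem coeff_cons_zero_eq_zero_of_eval_cons_zero {R : Type*} [CommRing R] [IsDomain R] {n : ℕ}
    {p : MvPolynomial (Fin (n + 1)) R} (s : Fin n → Set R) (hs : ∀ i, (s i).Infinite)
    (h : ∀ y ∈ Set.pi univ s, eval (Fin.cons 0 y) p = 0) (m : Fin n →₀ ℕ) :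
    coeff (m.cons 0) p = 0 := by
  have hrestr : (finSuccEquiv R n p).coeff 0 = 0 := by
    refine funext_set s hs fun y hy => ?_
    have := eval_eq_eval_mv_eval' y 0 p
    rwa [h y hy, ← Polynomial.coeff_zero_eq_eval_zero, Polynomial.coeff_map, eq_comm,
      ← map_zero (eval y)] at this
  rw [← finSuccEquiv_coeff_coeff, hrestr, coeff_zero]

end MvPolynomial

theorem coeff_eq_zero_of_eval_axis {p : MvPolynomial (Fin 2) ℂ} {S : Set ℂ} (hS : S.Infinite)
    (h : ∀ t ∈ S, eval ![0, t] p = 0) (j : ℕ) :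
    coeff (Finsupp.single 0 0 + Finsupp.single 1 j) p = 0 := by
  have hcons : (Finsupp.single 0 j : Fin 1 →₀ ℕ).cons 0 =
      Finsupp.single 0 0 + Finsupp.single 1 j := by
    ext k; fin_cases k
    · simp
    · exact (Finsupp.cons_succ (0 : Fin 1) 0 _).trans (by simp)
  rw [← hcons]
  refine coeff_cons_zero_eq_zero_of_eval_cons_zero (fun _ => S) (fun _ => hS) (fun y hy => ?_) _
  have hy' : (Fin.cons 0 y : Fin 2 → ℂ) = ![0, y 0] := by
    ext k; fin_cases k <;> rfl
  rw [hy']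
  exact h _ (hy 0 trivial)

theorem coeff_lapP (p : MvPolynomial (Fin 2) ℂ) (i j : ℕ) :
    coeff (Finsupp.single 0 i + Finsupp.single 1 j) (lapP p) =
      coeff (Finsupp.single 0 (i + 2) + Finsupp.single 1 j) p * ((i + 1) * (i + 2)) +
      coeff (Finsupp.single 0 i + Finsupp.single 1 (j + 2)) p * ((j + 1) * (j + 2)) := by
  have hxx : Finsupp.single 0 i + Finsupp.single 1 j + Finsupp.single 0 1 + Finsupp.single 0 1 =
      (Finsupp.single 0 (i + 2) + Finsupp.single 1 j : Fin 2 →₀ ℕ) := by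
    ext k; fin_cases k <;> simp
  have hyy : Finsupp.single 0 i + Finsupp.single 1 j + Finsupp.single 1 1 + Finsupp.single 1 1 =
      (Finsupp.single 0 i + Finsupp.single 1 (j + 2) : Fin 2 →₀ ℕ) := by
    ext k; fin_cases k <;> simp
  simp only [lapP, coeff_add, coeff_pderiv, hxx, hyy, Finsupp.coe_add, Pi.add_apply,
    Finsupp.single_eq_same, Finsupp.single_eq_of_ne zero_ne_one,
    Finsupp.single_eq_of_ne one_ne_zero, Nat.cast_add, Nat.cast_one, add_zero, zero_add]
  ring

theorem eq_zero_of_lapP_eq_zero_of_eval_axis {p : MvPolynomial (Fin 2) ℂ} {S : Set ℂ}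
    (hS : S.Infinite) (hp : lapP p = 0) (h₀ : ∀ t ∈ S, eval ![0, t] p = 0)
    (h₁ : ∀ t ∈ S, eval ![0, t] (pderiv 0 p) = 0) : p = 0 := by
  have hcoeff : ∀ i j, coeff (Finsupp.single 0 i + Finsupp.single 1 j) p = 0 := by
    intro i
    induction i using Nat.twoStepInduction with
    | zero => exact coeff_eq_zero_of_eval_axis hS h₀
    | one =>
      intro j
      simpa [coeff_pderiv, add_comm (Finsupp.single (1 : Fin 2) j)] using
        coeff_eq_zero_of_eval_axis hS h₁ j
    | more i ih _ =>
      intro j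
      have hrec := coeff_lapP p i j
      rw [hp, coeff_zero, ih (j + 2), zero_mul, add_zero, eq_comm] at hrec
      refine (mul_eq_zero.mp hrec).resolve_right ?_
      exact_mod_cast (by positivity : (i + 1) * (i + 2) ≠ 0)
  ext μ
  have hμ : μ = Finsupp.single 0 (μ 0) + Finsupp.single 1 (μ 1) := by
    ext k; fin_cases k <;> simp
  rw [hμ, hcoeff, coeff_zero]

theorem eq_of_evalAt_eq_on_isOpen {p q : MvPolynomial (Fin 2) ℂ} {U : Set (ℝ × ℝ)}
    (hU : IsOpen U) (hne : U.Nonempty) (h : ∀ z ∈ U, evalAt p z.1 z.2 = evalAt q z.1 z.2) :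
    p = q := by
  obtain ⟨z, hz⟩ := hne
  obtain ⟨ε, hε, hball⟩ := Metric.isOpen_iff.mp hU z hz
  have hinf (a : ℝ) : ((↑) '' Metric.ball a ε : Set ℂ).Infinite :=
    (Real.ball_eq_Ioo a ε ▸ Ioo_infinite (by linarith)).image Complex.ofReal_injective.injOn
  refine funext_set ![(↑) '' Metric.ball z.1 ε, (↑) '' Metric.ball z.2 ε]
    (fun i => by fin_cases i <;> exact hinf _) fun x hx => ?_
  obtain ⟨a, ha, hxa⟩ := hx 0 trivial
  obtain ⟨b, hb, hxb⟩ := hx 1 trivial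
  have hx : x = ![(a : ℂ), b] := by
    ext i; fin_cases i <;> simp [hxa, hxb]
  subst hx
  exact h (a, b) (hball (ball_prod_same z.1 z.2 ε ▸ ⟨ha, hb⟩))

theorem continuous_normSq_prod : Continuous fun z : ℝ × ℝ => z.1 ^ 2 + z.2 ^ 2 :=
  (continuous_fst.pow 2).add (continuous_snd.pow 2)

theorem isOpen_sectorPlus (R : ℝ) : IsOpen (sectorPlus R) :=
  (isOpen_lt continuous_fst continuous_const).inter
    ((isOpen_lt continuous_const continuous_snd).inter
      (isOpen_lt continuous_normSq_prod continuous_const))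

theorem isOpen_sectorMinus (R : ℝ) : IsOpen (sectorMinus R) :=
  (isOpen_lt continuous_const continuous_fst).inter
    ((isOpen_lt continuous_const continuous_snd).inter
      (isOpen_lt continuous_normSq_prod continuous_const))

theorem sectorPlus_nonempty {R : ℝ} (hR : 0 < R) : (sectorPlus R).Nonempty :=
  ⟨(-(R / 2), R / 2), by refine ⟨?_, ?_, ?_⟩ <;> dsimp only <;> nlinarith⟩

theorem sectorMinus_nonempty {R : ℝ} (hR : 0 < R) : (sectorMinus R).Nonempty :=
  ⟨(R / 2, R / 2), by refine ⟨?_, ?_, ?_⟩ <;> dsimp only <;> nlinarith⟩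

theorem stmt_6_general (R : ℝ) (hR : 0 < R)
    (H qp qm : MvPolynomial (Fin 2) ℂ)
    (hΔp : ∀ p ∈ sectorPlus R, evalAt (lapP qp) p.1 p.2 = evalAt H p.1 p.2)
    (hΔm : ∀ p ∈ sectorMinus R, evalAt (lapP qm) p.1 p.2 = evalAt H p.1 p.2)
    (htrans : ∀ t ∈ Set.Icc (0 : ℝ) R,
      evalAt qp 0 t = evalAt qm 0 t ∧
      evalAt (pderiv 0 qp) 0 t = evalAt (pderiv 0 qm) 0 t) :
    qp = qm := by
  have hlap : lapP qp = lapP qm :=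
    (eq_of_evalAt_eq_on_isOpen (isOpen_sectorPlus R) (sectorPlus_nonempty hR) hΔp).trans
      (eq_of_evalAt_eq_on_isOpen (isOpen_sectorMinus R) (sectorMinus_nonempty hR) hΔm).symm
  rw [← sub_eq_zero]
  refine eq_zero_of_lapP_eq_zero_of_eval_axis
    ((Icc_infinite hR).image Complex.ofReal_injective.injOn) ?_ ?_ ?_
  · simp only [lapP, map_sub] at hlap ⊢
    linear_combination hlap
  · rintro - ⟨t, ht, rfl⟩
    simpa [evalAt, sub_eq_zero] using (htrans t ht).1
  · rintro - ⟨t, ht, rfl⟩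
    simpa [evalAt, sub_eq_zero] using (htrans t ht).2

theorem stmt_6 (R : ℝ) (hR : 0 < R) (n : ℕ)
    (H qp qm : MvPolynomial (Fin 2) ℂ)
    (hHhom : H.IsHomogeneous n) (hHharm : lapP H = 0)
    (hqp : qp.IsHomogeneous (n + 2)) (hqm : qm.IsHomogeneous (n + 2))
    (hΔp : ∀ p ∈ sectorPlus R, evalAt (lapP qp) p.1 p.2 = evalAt H p.1 p.2)
    (hΔm : ∀ p ∈ sectorMinus R, evalAt (lapP qm) p.1 p.2 = evalAt H p.1 p.2)
    (htrans : ∀ t ∈ Set.Icc (0 : ℝ) R,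
      evalAt qp 0 t = evalAt qm 0 t ∧
      evalAt (pderiv 0 qp) 0 t = evalAt (pderiv 0 qm) 0 t)
    (hbp : ∀ s ∈ Set.Icc (-R) (0 : ℝ),
      evalAt qp s 0 = 0 ∧ evalAt (pderiv 1 qp) s 0 = 0)
    (hbm : ∀ s ∈ Set.Icc (0 : ℝ) R,
      evalAt qm s 0 = 0 ∧ evalAt (pderiv 1 qm) s 0 = 0) :
    qp = qm :=
  stmt_6_general R hR H qp qm hΔp hΔm htrans
end

section
/- Let n ≥ 0 be an integer and let q⁺ and q⁻ be homogeneous polynomials of degree n+2 in two real variables with complex coefficients such that Δ²q⁺ = 0 and Δ²q⁻ = 0 (each is biharmonic, equivalently each Laplacian Δq^± is a harmonic polynomial). Suppose: q⁺(0,t) = q⁻(0,t) and ∂q⁺/∂x₁(0,t) = ∂q⁻/∂x₁(0,t) for all t ∈ [0,R]; q⁺(s,0) = 0 and ∂q⁺/∂x₂(s,0) = 0 for all s ∈ [−R,0]; q⁻(s,0) = 0 and ∂q⁻/∂x₂(s,0) = 0 for all s ∈ [0,R]. Then q⁺ = q⁻ as polynomials, and consequently Δq⁺ = Δq⁻. 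-/
/-!
Put `q = q⁺ - q⁻` and let `d a b = ∂₁^a ∂₂^b q (0)`. In these coordinates `Δ` acts as
`d a b ↦ d (a + 2) b + d a (b + 2)`, so `Δ² q = 0` says that along each parity class of the
antidiagonal `a + b = n + 2` the sequence `dᵢ` obeys `dᵢ₊₂ + 2 dᵢ₊₁ + dᵢ = 0`, whose solutions are
`(-1)ⁱ (α + β i)`. The transmission conditions at `(0, R)` kill `d 0 (n + 2)` and `d 1 (n + 1)`,
the boundary conditions at `(∓R, 0)` kill `d (n + 2) 0` and `d (n + 1) 1`; so each parity class
vanishes at both of its ends, hence identically, and `q = 0`.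
-/

open MvPolynomial Set

open scoped Nat

/-- `∂₁^a ∂₂^b f (0)` -/
noncomputable def taylorCoeff {R : Type*} [CommSemiring R] (f : MvPolynomial (Fin 2) R)
    (a b : ℕ) : R :=
  (a ! * b ! : ℕ) * coeff (Finsupp.single 0 a + Finsupp.single 1 b) f

section TaylorCoeff

variable {R : Type*} [CommSemiring R]

theorem taylorCoeff_add (f g : MvPolynomial (Fin 2) R) (a b : ℕ) :
    taylorCoeff (f + g) a b = taylorCoeff f a b + taylorCoeff g a b := by
  simp only [taylorCoeff, coeff_add, mul_add]

theorem taylorCoeff_pderiv_zero (f : MvPolynomial (Fin 2) R) (a b : ℕ) :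
    taylorCoeff (pderiv 0 f) a b = taylorCoeff f (a + 1) b := by
  have hidx : Finsupp.single (0 : Fin 2) a + Finsupp.single 1 b + Finsupp.single 0 1
      = Finsupp.single 0 (a + 1) + Finsupp.single 1 b := by
    rw [add_right_comm, ← Finsupp.single_add]
  have hexp : (Finsupp.single (0 : Fin 2) a + Finsupp.single 1 b : Fin 2 →₀ ℕ) 0 = a := by simp
  rw [taylorCoeff, taylorCoeff, coeff_pderiv, hidx, hexp, Nat.factorial_succ]
  push_cast
  ring

theorem taylorCoeff_pderiv_one (f : MvPolynomial (Fin 2) R) (a b : ℕ) :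
    taylorCoeff (pderiv 1 f) a b = taylorCoeff f a (b + 1) := by
  have hidx : Finsupp.single (0 : Fin 2) a + Finsupp.single 1 b + Finsupp.single 1 1
      = Finsupp.single 0 a + Finsupp.single 1 (b + 1) := by
    rw [add_assoc, ← Finsupp.single_add]
  have hexp : (Finsupp.single (0 : Fin 2) a + Finsupp.single 1 b : Fin 2 →₀ ℕ) 1 = b := by simp
  rw [taylorCoeff, taylorCoeff, coeff_pderiv, hidx, hexp, Nat.factorial_succ]
  push_cast
  ring

theorem taylorCoeff_eq_zero_iff [IsDomain R] [CharZero R] (f : MvPolynomial (Fin 2) R) (a b : ℕ) :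
    taylorCoeff f a b = 0 ↔ coeff (Finsupp.single 0 a + Finsupp.single 1 b) f = 0 := by
  simp [taylorCoeff, Nat.factorial_ne_zero]

theorem eq_zero_of_taylorCoeff_eq_zero [IsDomain R] [CharZero R] {f : MvPolynomial (Fin 2) R}
    {m : ℕ} (hf : f.IsHomogeneous m) (h : ∀ a b, a + b = m → taylorCoeff f a b = 0) : f = 0 := by
  ext d
  rw [coeff_zero]
  by_cases hdeg : d.degree = m
  · have hsplit : d = Finsupp.single 0 (d 0) + Finsupp.single 1 (d 1) := by
      ext j; fin_cases j <;> simp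
    rw [Finsupp.degree_eq_sum, Fin.sum_univ_two] at hdeg
    rw [hsplit, ← taylorCoeff_eq_zero_iff]
    exact h _ _ hdeg
  · exact hf.coeff_eq_zero hdeg

end TaylorCoeff

theorem taylorCoeff_sub {R : Type*} [CommRing R] (f g : MvPolynomial (Fin 2) R) (a b : ℕ) :
    taylorCoeff (f - g) a b = taylorCoeff f a b - taylorCoeff g a b := by
  simp only [taylorCoeff, coeff_sub, mul_sub]

theorem MvPolynomial.IsHomogeneous.eval_piSingle {σ R : Type*} [DecidableEq σ] [CommSemiring R]
    {f : MvPolynomial σ R} {m : ℕ} (hf : f.IsHomogeneous m) (i : σ) (t : R) :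
    eval (Pi.single i t) f = coeff (Finsupp.single i m) f * t ^ m := by
  rw [eval_eq, Finset.sum_eq_single (Finsupp.single i m)]
  · rcases eq_or_ne m 0 with rfl | hm
    · simp
    · simp [Finsupp.support_single _ hm]
  · intro d hd hne
    obtain ⟨j, hj, hji⟩ : ∃ j ∈ d.support, j ≠ i := by
      by_contra! hsub
      have hd_eq : d = Finsupp.single i (d i) :=
        Finsupp.support_subset_singleton.mp fun j hj => Finset.mem_singleton.mpr (hsub j hj)
      have hdeg : d.degree = m := by
        by_contra h
        exact mem_support_iff.mp hd (hf.coeff_eq_zero h)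
      rw [hd_eq, Finsupp.degree_single] at hdeg
      exact hne (hdeg ▸ hd_eq)
    rw [Finset.prod_eq_zero hj (by simp [hji, Finsupp.mem_support_iff.mp hj]), mul_zero]
  · intro h
    rw [notMem_support_iff.mp h, zero_mul]

theorem taylorCoeff_zero_left_eq_zero {f : MvPolynomial (Fin 2) ℂ} {m : ℕ}
    (hf : f.IsHomogeneous m) {t : ℝ} (ht : t ≠ 0) (h : evalAt f 0 t = 0) :
    taylorCoeff f 0 m = 0 := by
  have hpt : ![((0 : ℝ) : ℂ), (t : ℂ)] = Pi.single 1 (t : ℂ) := by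
    ext j; fin_cases j <;> simp
  rw [evalAt, hpt, hf.eval_piSingle, mul_eq_zero] at h
  rw [taylorCoeff_eq_zero_iff, Finsupp.single_zero, zero_add]
  exact h.resolve_right (pow_ne_zero _ (Complex.ofReal_ne_zero.mpr ht))

theorem taylorCoeff_zero_right_eq_zero {f : MvPolynomial (Fin 2) ℂ} {m : ℕ}
    (hf : f.IsHomogeneous m) {s : ℝ} (hs : s ≠ 0) (h : evalAt f s 0 = 0) :
    taylorCoeff f m 0 = 0 := by
  have hpt : ![(s : ℂ), ((0 : ℝ) : ℂ)] = Pi.single 0 (s : ℂ) := by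
    ext j; fin_cases j <;> simp
  rw [evalAt, hpt, hf.eval_piSingle, mul_eq_zero] at h
  rw [taylorCoeff_eq_zero_iff, Finsupp.single_zero, add_zero]
  exact h.resolve_right (pow_ne_zero _ (Complex.ofReal_ne_zero.mpr hs))

theorem evalAt_sub (f g : MvPolynomial (Fin 2) ℂ) (x y : ℝ) :
    evalAt (f - g) x y = evalAt f x y - evalAt g x y :=
  map_sub _ f g

theorem lapP_sub (f g : MvPolynomial (Fin 2) ℂ) : lapP (f - g) = lapP f - lapP g := by
  simp only [lapP, map_sub]
  abel

theorem taylorCoeff_lapP (f : MvPolynomial (Fin 2) ℂ) (a b : ℕ) :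
    taylorCoeff (lapP f) a b = taylorCoeff f (a + 2) b + taylorCoeff f a (b + 2) := by
  rw [lapP, taylorCoeff_add, taylorCoeff_pderiv_zero, taylorCoeff_pderiv_zero,
    taylorCoeff_pderiv_one, taylorCoeff_pderiv_one]

theorem taylorCoeff_lapP_lapP (f : MvPolynomial (Fin 2) ℂ) (a b : ℕ) :
    taylorCoeff (lapP (lapP f)) a b =
      taylorCoeff f (a + 4) b + 2 * taylorCoeff f (a + 2) (b + 2) + taylorCoeff f a (b + 4) := by
  simp only [taylorCoeff_lapP]
  ring

section Recurrence

variable {K : Type*} [CommRing K] [IsDomain K] [CharZero K]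

theorem eq_zero_of_double_root_recurrence {f : ℕ → K} {L : ℕ}
    (hrec : ∀ i, i + 2 ≤ L → f (i + 2) + 2 * f (i + 1) + f i = 0)
    (h0 : f 0 = 0) (hL : f L = 0) : ∀ i ≤ L, f i = 0 := by
  -- `-1` is a double root of the characteristic polynomial
  have hclosed : ∀ i, i ≤ L → f i = (-1) ^ (i + 1) * i * f 1 := by
    intro i
    induction i using Nat.twoStepInduction with
    | zero => simp [h0]
    | one => simp
    | more i ih0 ih1 =>
      intro hi
      have h := hrec i hi
      rw [ih0 (by omega), ih1 (by omega)] at h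
      push_cast at h ⊢
      linear_combination h
  intro i hi
  have hLf : (L : K) * f 1 = 0 := by
    simpa [hclosed L le_rfl, mul_assoc] using hL
  rcases mul_eq_zero.mp hLf with hL0 | hf1
  · have hL0 : L = 0 := by exact_mod_cast hL0
    obtain rfl : i = 0 := by omega
    exact h0
  · rw [hclosed i hi, hf1, mul_zero]

theorem antidiagonal_eq_zero_of_recurrence {g : ℕ → ℕ → K} {m : ℕ}
    (hrec : ∀ a b, a + b + 4 = m → g (a + 4) b + 2 * g (a + 2) (b + 2) + g a (b + 4) = 0)
    (hends : ∀ a b, a + b = m → a ≤ 1 ∨ b ≤ 1 → g a b = 0) :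
    ∀ a b, a + b = m → g a b = 0 := by
  intro a b hab
  set p := a % 2
  have hclass := eq_zero_of_double_root_recurrence (f := fun i => g (p + 2 * i) (m - p - 2 * i))
    (L := (m - p) / 2) ?_ ?_ ?_ (a / 2) (by omega)
  · convert hclass using 2 <;> omega
  · intro i hi
    obtain ⟨k, hk⟩ : ∃ k, m - p - 2 * i = k + 4 := ⟨m - p - 2 * i - 4, by omega⟩
    rw [hk, show m - p - 2 * (i + 1) = k + 2 by omega, show m - p - 2 * (i + 2) = k by omega,
      show p + 2 * (i + 1) = p + 2 * i + 2 by ring, show p + 2 * (i + 2) = p + 2 * i + 4 by ring]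
    exact hrec (p + 2 * i) k (by omega)
  · exact hends _ _ (by omega) (Or.inl (by omega))
  · exact hends _ _ (by omega) (Or.inr (by omega))

end Recurrence

theorem stmt_7 (R : ℝ) (hR : 0 < R) (n : ℕ)
    (qp qm : MvPolynomial (Fin 2) ℂ)
    (hqp : qp.IsHomogeneous (n + 2)) (hqm : qm.IsHomogeneous (n + 2))
    (hbiharmP : lapP (lapP qp) = 0) (hbiharmM : lapP (lapP qm) = 0)
    (htrans : ∀ t ∈ Set.Icc (0 : ℝ) R,
      evalAt qp 0 t = evalAt qm 0 t ∧
      evalAt (pderiv 0 qp) 0 t = evalAt (pderiv 0 qm) 0 t)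
    (hbp : ∀ s ∈ Set.Icc (-R) (0 : ℝ),
      evalAt qp s 0 = 0 ∧ evalAt (pderiv 1 qp) s 0 = 0)
    (hbm : ∀ s ∈ Set.Icc (0 : ℝ) R,
      evalAt qm s 0 = 0 ∧ evalAt (pderiv 1 qm) s 0 = 0) :
    qp = qm ∧ lapP qp = lapP qm := by
  have hq : (qp - qm).IsHomogeneous (n + 2) := hqp.sub hqm
  have hR0 : R ≠ 0 := hR.ne'
  have hRmem : R ∈ Icc 0 R := ⟨hR.le, le_rfl⟩
  have hnegR : -R ∈ Icc (-R) 0 := ⟨le_rfl, by linarith⟩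
  have hends : ∀ a b, a + b = n + 2 → a ≤ 1 ∨ b ≤ 1 → taylorCoeff (qp - qm) a b = 0 := by
    intro a b hab hab'
    obtain ⟨rfl, rfl⟩ | ⟨rfl, rfl⟩ | ⟨rfl, rfl⟩ | ⟨rfl, rfl⟩ :
        (a = 0 ∧ b = n + 2) ∨ (a = 1 ∧ b = n + 1) ∨ (a = n + 2 ∧ b = 0) ∨ (a = n + 1 ∧ b = 1) := by
      omega
    · exact taylorCoeff_zero_left_eq_zero hq hR0
        (by rw [evalAt_sub, (htrans R hRmem).1, sub_self])
    · rw [← taylorCoeff_pderiv_zero]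
      exact taylorCoeff_zero_left_eq_zero (m := n + 1) hq.pderiv hR0
        (by rw [map_sub, evalAt_sub, (htrans R hRmem).2, sub_self])
    · rw [taylorCoeff_sub, taylorCoeff_zero_right_eq_zero hqp (neg_ne_zero.mpr hR0) (hbp _ hnegR).1,
        taylorCoeff_zero_right_eq_zero hqm hR0 (hbm _ hRmem).1, sub_zero]
    · rw [← taylorCoeff_pderiv_one, map_sub, taylorCoeff_sub,
        taylorCoeff_zero_right_eq_zero (m := n + 1) hqp.pderiv (neg_ne_zero.mpr hR0) (hbp _ hnegR).2,
        taylorCoeff_zero_right_eq_zero (m := n + 1) hqm.pderiv hR0 (hbm _ hRmem).2, sub_zero]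
  have hrec : ∀ a b, a + b + 4 = n + 2 → taylorCoeff (qp - qm) (a + 4) b
      + 2 * taylorCoeff (qp - qm) (a + 2) (b + 2) + taylorCoeff (qp - qm) a (b + 4) = 0 :=
    fun a b _ => by
      rw [← taylorCoeff_lapP_lapP, lapP_sub, lapP_sub, hbiharmP, hbiharmM, sub_zero,
        taylorCoeff_eq_zero_iff, coeff_zero]
  have hqq : qp = qm := sub_eq_zero.mp
    (eq_zero_of_taylorCoeff_eq_zero hq (antidiagonal_eq_zero_of_recurrence hrec hends))
  exact ⟨hqq, congrArg lapP hqq⟩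
end

section
/- Let n ≥ 2 be an integer and let a₀, a₁, …, a_{n+2} ∈ ℂ satisfy a₀ = a₁ = 0, a_{n+1} = a_{n+2} = 0, and, for every integer j with 0 ≤ j ≤ n−2, (j+1)(j+2)(j+3)(j+4) a_{j+4} + 2(j+1)(j+2)(n−j−1)(n−j) a_{j+2} + (n−j−1)(n−j)(n−j+1)(n−j+2) a_j = 0. Then a_j = 0 for all 0 ≤ j ≤ n+2. -/
private lemma castStep (N i s : ℕ) (h : N - i = s) :
    ((N.choose (i + 1) : ℕ) : ℂ) * ((i : ℂ) + 1) = ((N.choose i : ℕ) : ℂ) * (s : ℂ) := by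
  have h2 := Nat.choose_succ_right_eq N i
  rw [h] at h2
  exact_mod_cast h2

theorem stmt_10 (n : ℕ) (hn : 2 ≤ n) (a : ℕ → ℂ)
    (h0 : a 0 = 0) (h1 : a 1 = 0)
    (hn1 : a (n + 1) = 0) (hn2 : a (n + 2) = 0)
    (hrec : ∀ j : ℕ, j ≤ n - 2 →
      (((j + 1) * (j + 2) * (j + 3) * (j + 4) : ℕ) : ℂ) * a (j + 4)
        + 2 * (((j + 1) * (j + 2) * (n - j - 1) * (n - j) : ℕ) : ℂ) * a (j + 2)
        + (((n - j - 1) * (n - j) * (n - j + 1) * (n - j + 2) : ℕ) : ℂ) * a j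
        = 0) :
    ∀ j : ℕ, j ≤ n + 2 → a j = 0 := by
  -- Even chain
  have hE : ∀ k : ℕ, 2 * k + 2 ≤ n + 2 →
      ((n : ℂ) + 1) * a (2 * k + 2)
        = (-1) ^ k * (((n + 1).choose (2 * k + 1) : ℕ) : ℂ) * a 2 := by
    intro k
    induction k using Nat.strong_induction_on with
    | _ k ih =>
      match k with
      | 0 =>
        intro _
        show ((n : ℂ) + 1) * a 2 = (-1) ^ 0 * (((n + 1).choose 1 : ℕ) : ℂ) * a 2
        rw [Nat.choose_one_right]
        push_cast
        ring
      | 1 =>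
        intro _
        show ((n : ℂ) + 1) * a 4 = (-1) ^ 1 * (((n + 1).choose 3 : ℕ) : ℂ) * a 2
        obtain ⟨t, ht⟩ : ∃ t, n = t + 2 := ⟨n - 2, by omega⟩
        subst ht
        have H := hrec 0 (by omega)
        rw [show t + 2 - 0 - 1 = t + 1 by omega, show t + 2 - 0 = t + 2 by omega, h0] at H
        norm_num at H
        rw [show t + 2 + 1 = t + 3 by omega]
        have s1 := castStep (t + 3) 1 (t + 2) (by omega)
        have s2 := castStep (t + 3) 2 (t + 1) (by omega)
        norm_num at s1 s2
        linear_combination (norm := (push_cast; ring1)) ((t : ℂ) + 3) / 24 * H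
          + (a 2) / 3 * s2 + ((t : ℂ) + 1) * (a 2) / 6 * s1
      | (k + 2) =>
        intro hk
        show ((n : ℂ) + 1) * a (2 * k + 6)
          = (-1) ^ (k + 2) * (((n + 1).choose (2 * k + 5) : ℕ) : ℂ) * a 2
        obtain ⟨t, ht⟩ : ∃ t, n = 2 * k + t + 4 := ⟨n - (2 * k + 4), by omega⟩
        subst ht
        have H := hrec (2 * k + 2) (by omega)
        rw [show 2 * k + t + 4 - (2 * k + 2) - 1 = t + 1 by omega,
            show 2 * k + t + 4 - (2 * k + 2) = t + 2 by omega,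
            show 2 * k + 2 + 4 = 2 * k + 6 by omega,
            show 2 * k + 2 + 2 = 2 * k + 4 by omega] at H
        have ih0 := ih k (by omega) (by omega)
        have ih1 := ih (k + 1) (by omega) (by omega)
        rw [show 2 * (k + 1) + 2 = 2 * k + 4 by omega,
            show 2 * (k + 1) + 1 = 2 * k + 3 by omega] at ih1
        rw [show 2 * k + t + 4 + 1 = 2 * k + t + 5 by omega] at ih0 ih1 ⊢
        have s1 := castStep (2 * k + t + 5) (2 * k + 1) (t + 4) (by omega)
        have s2 := castStep (2 * k + t + 5) (2 * k + 2) (t + 3) (by omega)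
        have s3 := castStep (2 * k + t + 5) (2 * k + 3) (t + 2) (by omega)
        have s4 := castStep (2 * k + t + 5) (2 * k + 4) (t + 1) (by omega)
        rw [show 2 * k + 1 + 1 = 2 * k + 2 by omega] at s1
        rw [show 2 * k + 2 + 1 = 2 * k + 3 by omega] at s2
        rw [show 2 * k + 3 + 1 = 2 * k + 4 by omega] at s3
        rw [show 2 * k + 4 + 1 = 2 * k + 5 by omega] at s4
        have hP : ((((2 * k + 3) * (2 * k + 4) * (2 * k + 5) * (2 * k + 6) : ℕ)) : ℂ) ≠ 0 :=
          Nat.cast_ne_zero.mpr (by positivity)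
        refine mul_left_cancel₀ hP ?_
        linear_combination (norm := (push_cast; ring1))
          (2 * (k : ℂ) + (t : ℂ) + 5) * H
          - (2 * (2 * (k : ℂ) + 3) * (2 * (k : ℂ) + 4) * ((t : ℂ) + 1) * ((t : ℂ) + 2)) * ih1
          - (((t : ℂ) + 1) * ((t : ℂ) + 2) * ((t : ℂ) + 3) * ((t : ℂ) + 4)) * ih0
          - (-1) ^ k * a 2 *
            ( (2 * (k : ℂ) + 3) * (2 * (k : ℂ) + 4) * (2 * (k : ℂ) + 6) * s4
            + (2 * (k : ℂ) + 3) * (2 * (k : ℂ) + 6) * ((t : ℂ) + 1) * s3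
            - ((t : ℂ) + 1) * ((t : ℂ) + 2) * (2 * (k : ℂ) + 2) * s2
            - ((t : ℂ) + 1) * ((t : ℂ) + 2) * ((t : ℂ) + 3) * s1 )
  -- Odd chain
  have hO : ∀ k : ℕ, 2 * k + 1 ≤ n + 2 →
      (2 * (((n + 2).choose 3 : ℕ) : ℂ)) * a (2 * k + 1)
        = (-1) ^ (k + 1) * (2 * ((k : ℕ) : ℂ)) * (((n + 2).choose (2 * k + 1) : ℕ) : ℂ) * a 3 := by
    intro k
    induction k using Nat.strong_induction_on with
    | _ k ih =>
      match k with
      | 0 =>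
        intro _
        show (2 * (((n + 2).choose 3 : ℕ) : ℂ)) * a 1
          = (-1) ^ 1 * (2 * ((0 : ℕ) : ℂ)) * (((n + 2).choose 1 : ℕ) : ℂ) * a 3
        rw [h1]
        norm_num
      | 1 =>
        intro _
        show (2 * (((n + 2).choose 3 : ℕ) : ℂ)) * a 3
          = (-1) ^ 2 * (2 * ((1 : ℕ) : ℂ)) * (((n + 2).choose 3 : ℕ) : ℂ) * a 3
        push_cast
        ring
      | (k + 2) =>
        intro hk
        show (2 * (((n + 2).choose 3 : ℕ) : ℂ)) * a (2 * k + 5)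
          = (-1) ^ (k + 3) * (2 * ((k + 2 : ℕ) : ℂ)) * (((n + 2).choose (2 * k + 5) : ℕ) : ℂ) * a 3
        obtain ⟨t, ht⟩ : ∃ t, n = 2 * k + t + 3 := ⟨n - (2 * k + 3), by omega⟩
        subst ht
        have H := hrec (2 * k + 1) (by omega)
        rw [show 2 * k + t + 3 - (2 * k + 1) - 1 = t + 1 by omega,
            show 2 * k + t + 3 - (2 * k + 1) = t + 2 by omega,
            show 2 * k + 1 + 4 = 2 * k + 5 by omega,
            show 2 * k + 1 + 2 = 2 * k + 3 by omega] at H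
        have ih0 := ih k (by omega) (by omega)
        have ih1 := ih (k + 1) (by omega) (by omega)
        rw [show 2 * (k + 1) + 1 = 2 * k + 3 by omega] at ih1
        rw [show 2 * k + t + 3 + 2 = 2 * k + t + 5 by omega] at ih0 ih1 ⊢
        have r1 := castStep (2 * k + t + 5) (2 * k + 1) (t + 4) (by omega)
        have r2 := castStep (2 * k + t + 5) (2 * k + 2) (t + 3) (by omega)
        have r3 := castStep (2 * k + t + 5) (2 * k + 3) (t + 2) (by omega)
        have r4 := castStep (2 * k + t + 5) (2 * k + 4) (t + 1) (by omega)
        rw [show 2 * k + 1 + 1 = 2 * k + 2 by omega] at r1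
        rw [show 2 * k + 2 + 1 = 2 * k + 3 by omega] at r2
        rw [show 2 * k + 3 + 1 = 2 * k + 4 by omega] at r3
        rw [show 2 * k + 4 + 1 = 2 * k + 5 by omega] at r4
        have hP : ((((2 * k + 2) * (2 * k + 3) * (2 * k + 4) * (2 * k + 5) : ℕ)) : ℂ) ≠ 0 :=
          Nat.cast_ne_zero.mpr (by positivity)
        refine mul_left_cancel₀ hP ?_
        linear_combination (norm := (push_cast; ring1))
          (2 * (((2 * k + t + 5).choose 3 : ℕ) : ℂ)) * H
          - (2 * (2 * (k : ℂ) + 2) * (2 * (k : ℂ) + 3) * ((t : ℂ) + 1) * ((t : ℂ) + 2)) * ih1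
          - (((t : ℂ) + 1) * ((t : ℂ) + 2) * ((t : ℂ) + 3) * ((t : ℂ) + 4)) * ih0
          + (-1) ^ k * a 3 *
            ( (2 * (k : ℂ) + 2) * (2 * (k : ℂ) + 3) * (2 * (k : ℂ) + 4) * (2 * (k : ℂ) + 4) * r4
            + (2 * (k : ℂ) + 2) * (2 * (k : ℂ) + 3) * (2 * (k : ℂ) + 4) * ((t : ℂ) + 1) * r3
            - ((t : ℂ) + 1) * ((t : ℂ) + 2) * (2 * (k : ℂ)) * (2 * (k : ℂ) + 2) * r2
            - ((t : ℂ) + 1) * ((t : ℂ) + 2) * ((t : ℂ) + 3) * (2 * (k : ℂ)) * r1 )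
  -- basic nonvanishing facts
  have mulz : ∀ c x : ℂ, c ≠ 0 → c * x = 0 → x = 0 := by
    intro c x hc h
    rcases mul_eq_zero.mp h with h' | h'
    · exact absurd h' hc
    · exact h'
  have hnne : ((n : ℂ) + 1) ≠ 0 := by
    have : ((n + 1 : ℕ) : ℂ) ≠ 0 := Nat.cast_ne_zero.mpr (by omega)
    push_cast at this; exact this
  have hC3 : (2 * (((n + 2).choose 3 : ℕ) : ℂ)) ≠ 0 :=
    mul_ne_zero two_ne_zero (Nat.cast_ne_zero.mpr (Nat.choose_pos (by omega)).ne')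
  have hneg : ∀ p : ℕ, ((-1 : ℂ)) ^ p ≠ 0 := fun p => pow_ne_zero _ (by norm_num)
  -- a 2 = 0
  have ha2 : a 2 = 0 := by
    rcases Nat.even_or_odd n with ⟨p, hp⟩ | ⟨p, hp⟩
    · have h := hE p (by omega)
      have htop : a (2 * p + 2) = 0 := by rw [show 2 * p + 2 = n + 2 by omega]; exact hn2
      have hC : (((n + 1).choose (2 * p + 1) : ℕ) : ℂ) ≠ 0 :=
        Nat.cast_ne_zero.mpr (Nat.choose_pos (by omega)).ne'
      exact mulz _ _ (mul_ne_zero (hneg p) hC)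
        (by linear_combination -h + ((n : ℂ) + 1) * htop)
    · have h := hE p (by omega)
      have htop : a (2 * p + 2) = 0 := by rw [show 2 * p + 2 = n + 1 by omega]; exact hn1
      have hC : (((n + 1).choose (2 * p + 1) : ℕ) : ℂ) ≠ 0 :=
        Nat.cast_ne_zero.mpr (Nat.choose_pos (by omega)).ne'
      exact mulz _ _ (mul_ne_zero (hneg p) hC)
        (by linear_combination -h + ((n : ℂ) + 1) * htop)
  -- a 3 = 0
  have ha3 : a 3 = 0 := by
    rcases Nat.even_or_odd n with ⟨p, hp⟩ | ⟨p, hp⟩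
    · have h := hO p (by omega)
      have htop : a (2 * p + 1) = 0 := by rw [show 2 * p + 1 = n + 1 by omega]; exact hn1
      have hC : (((n + 2).choose (2 * p + 1) : ℕ) : ℂ) ≠ 0 :=
        Nat.cast_ne_zero.mpr (Nat.choose_pos (by omega)).ne'
      have hp' : (2 * ((p : ℕ) : ℂ)) ≠ 0 :=
        mul_ne_zero two_ne_zero (Nat.cast_ne_zero.mpr (by omega))
      refine mulz ((-1) ^ (p + 1) * (2 * ((p : ℕ) : ℂ)) * (((n + 2).choose (2 * p + 1) : ℕ) : ℂ))
        _ (mul_ne_zero (mul_ne_zero (hneg (p + 1)) hp') hC) ?_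
      linear_combination -h + (2 * (((n + 2).choose 3 : ℕ) : ℂ)) * htop
    · have h := hO (p + 1) (by omega)
      have htop : a (2 * (p + 1) + 1) = 0 := by rw [show 2 * (p + 1) + 1 = n + 2 by omega]; exact hn2
      have hC : (((n + 2).choose (2 * (p + 1) + 1) : ℕ) : ℂ) ≠ 0 :=
        Nat.cast_ne_zero.mpr (Nat.choose_pos (by omega)).ne'
      have hp' : (2 * ((p + 1 : ℕ) : ℂ)) ≠ 0 :=
        mul_ne_zero two_ne_zero (Nat.cast_ne_zero.mpr (by omega))
      refine mulz ((-1) ^ (p + 1 + 1) * (2 * ((p + 1 : ℕ) : ℂ))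
          * (((n + 2).choose (2 * (p + 1) + 1) : ℕ) : ℂ))
        _ (mul_ne_zero (mul_ne_zero (hneg (p + 1 + 1)) hp') hC) ?_
      linear_combination -h + (2 * (((n + 2).choose 3 : ℕ) : ℂ)) * htop
  -- conclusion
  intro j hj
  rcases Nat.even_or_odd j with ⟨p, hp⟩ | ⟨p, hp⟩
  · match p, hp with
    | 0, hp => rw [show j = 0 by omega]; exact h0
    | (q + 1), hp =>
      have h := hE q (by omega)
      rw [show 2 * q + 2 = j by omega, ha2] at h
      exact mulz _ _ hnne (by linear_combination h)
  · have h := hO p (by omega)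
    rw [show 2 * p + 1 = j by omega, ha3] at h
    exact mulz _ _ hC3 (by linear_combination h)
end
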